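/- Order-1 Casimir eigenvalue on the power function: let n ≥ 1 and let α = (α₁,…,α_n) ∈ ℂⁿ satisfy Σ_{v=1}^n α_v = 0; set ρ_v := (n+1)/2 − v. Then the function Σ_{i=1}^n D_{i,i} |·|^{α+ρ} is identically zero on GL(n,ℝ), i.e. for every g ∈ GL(n,ℝ), Σ_{i=1}^n d/dt |g(I + tE_{i,i})|^{α+ρ} |_{t=0} = 0. -/

import Mathlib

open scoped Classical

noncomputable section

/-- The standard inner product on `ℝⁿ`. -/
def dotR {n : ℕ} (x y : Fin n → ℝ) : ℝ := ∑ u, x u * y u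

/-- Gram–Schmidt orthogonalization (without normalization) of a family
`f : Fin n → ℝⁿ`:  `gs f v = f v − Σ_{k < v} (⟨f v, gs f k⟩ / ⟨gs f k, gs f k⟩) gs f k`. -/
def gs {n : ℕ} (f : Fin n → Fin n → ℝ) : Fin n → Fin n → ℝ
  | v => f v - ∑ k : Fin v.val,
      (fun b => (dotR (f v) b / dotR b b) • b) (gs f ⟨k.val, Nat.lt_trans k.isLt v.isLt⟩)
  termination_by v => v.val
  decreasing_by exact k.isLt

/-- The power function `|·|^γ : GL(n,ℝ) → ℂ`,
`|g|^γ = ∏_v ⟨h_v, h_v⟩^{−γ_v/2}` where `(h₁,…,h_n)` is the Gram–Schmidt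
orthogonalization (without normalization) of the columns of `g⁻¹` and complex powers
of positive reals are principal (`z^s = exp (s log z)`). -/
def powFun (n : ℕ) (γ : Fin n → ℂ) (g : Matrix (Fin n) (Fin n) ℝ) : ℂ :=
  ∏ v : Fin n,
    ((dotR (gs (fun w u => g⁻¹ u w) v) (gs (fun w u => g⁻¹ u w) v) : ℂ)) ^ (-(γ v) / 2)

/-! ### Auxiliary lemmas -/

theorem gs_apply {n : ℕ} (f : Fin n → Fin n → ℝ) (v : Fin n) :
    gs f v = f v - ∑ k : Fin v.val,
      (dotR (f v) (gs f ⟨k.val, Nat.lt_trans k.isLt v.isLt⟩) /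
        dotR (gs f ⟨k.val, Nat.lt_trans k.isLt v.isLt⟩)
          (gs f ⟨k.val, Nat.lt_trans k.isLt v.isLt⟩)) •
        gs f ⟨k.val, Nat.lt_trans k.isLt v.isLt⟩ := by
  conv_lhs => rw [gs.eq_1]

theorem dotR_nonneg {n : ℕ} (x : Fin n → ℝ) : 0 ≤ dotR x x :=
  Finset.sum_nonneg fun u _ => mul_self_nonneg _

theorem dotR_self_pos {n : ℕ} {x : Fin n → ℝ} (hx : x ≠ 0) : 0 < dotR x x := by
  rcases (dotR_nonneg x).lt_or_eq with h | h
  · exact h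
  · exfalso
    apply hx
    funext u
    have h0 : ∀ u ∈ Finset.univ, x u * x u = 0 := by
      rw [← Finset.sum_eq_zero_iff_of_nonneg fun u _ => mul_self_nonneg (x u)]
      exact h.symm
    have := h0 u (Finset.mem_univ u)
    simpa [mul_self_eq_zero] using this

theorem dotR_smul_smul {n : ℕ} (r : ℝ) (x y : Fin n → ℝ) :
    dotR (r • x) (r • y) = (r * r) * dotR x y := by
  simp only [dotR, Pi.smul_apply, smul_eq_mul, Finset.mul_sum]
  exact Finset.sum_congr rfl fun u _ => by ring

/-- Gram–Schmidt is homogeneous of degree 1. -/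
theorem gs_smul {n : ℕ} (f : Fin n → Fin n → ℝ) {r : ℝ} (hr : r ≠ 0) (v : Fin n) :
    gs (fun w => r • f w) v = r • gs f v := by
  have key : ∀ m : ℕ, ∀ v : Fin n, v.val = m → gs (fun w => r • f w) v = r • gs f v := by
    intro m
    induction m using Nat.strong_induction_on with
    | _ m ih =>
      intro v hv
      rw [gs_apply (fun w => r • f w) v, gs_apply f v, smul_sub, Finset.smul_sum]
      congr 1
      refine Finset.sum_congr rfl fun k _ => ?_
      rw [ih k.val (hv ▸ k.isLt) ⟨k.val, Nat.lt_trans k.isLt v.isLt⟩ rfl]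
      rw [dotR_smul_smul, dotR_smul_smul, mul_div_mul_left _ _ (mul_ne_zero hr hr)]
      rw [smul_comm]
  exact key v.val v rfl

theorem gs_mem_span {n : ℕ} (f : Fin n → Fin n → ℝ) (v : Fin n) :
    gs f v ∈ Submodule.span ℝ (f '' {w : Fin n | w.val ≤ v.val}) := by
  have key : ∀ m : ℕ, ∀ v : Fin n, v.val = m →
      gs f v ∈ Submodule.span ℝ (f '' {w : Fin n | w.val ≤ v.val}) := by
    intro m
    induction m using Nat.strong_induction_on with
    | _ m ih =>
      intro v hv
      rw [gs_apply]
      apply sub_mem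
      · exact Submodule.subset_span ⟨v, by simp, rfl⟩
      · apply Submodule.sum_mem
        intro k _
        apply Submodule.smul_mem
        refine Submodule.span_mono (Set.image_mono ?_)
          (ih k.val (hv ▸ k.isLt) ⟨k.val, Nat.lt_trans k.isLt v.isLt⟩ rfl)
        intro w hw
        simp only [Set.mem_setOf_eq] at hw ⊢
        have hk : k.val < m := hv ▸ k.isLt
        omega
  exact key v.val v rfl

theorem gs_ne_zero {n : ℕ} {f : Fin n → Fin n → ℝ} (hf : LinearIndependent ℝ f) (v : Fin n) :
    gs f v ≠ 0 := by
  intro h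
  have h2 : f v = ∑ k : Fin v.val,
      (dotR (f v) (gs f ⟨k.val, Nat.lt_trans k.isLt v.isLt⟩) /
        dotR (gs f ⟨k.val, Nat.lt_trans k.isLt v.isLt⟩)
          (gs f ⟨k.val, Nat.lt_trans k.isLt v.isLt⟩)) •
        gs f ⟨k.val, Nat.lt_trans k.isLt v.isLt⟩ := by
    have := gs_apply f v
    rw [h] at this
    exact sub_eq_zero.mp this.symm
  have hmem : f v ∈ Submodule.span ℝ (f '' {w : Fin n | w.val < v.val}) := by
    rw [h2]
    apply Submodule.sum_mem
    intro k _
    apply Submodule.smul_mem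
    refine Submodule.span_mono (Set.image_mono ?_)
      (gs_mem_span f ⟨k.val, Nat.lt_trans k.isLt v.isLt⟩)
    intro w hw
    simp only [Set.mem_setOf_eq] at hw ⊢
    have hk := k.isLt
    omega
  exact hf.notMem_span_image (by simp : v ∉ {w : Fin n | w.val < v.val}) hmem

/-! ### The deformation family and its power function -/

variable {n : ℕ}

/-- The columns of `(g (1 + diag t))⁻¹`, as explicit functions of `t`. -/
def Fam (g : Matrix (Fin n) (Fin n) ℝ) (t : Fin n → ℝ) : Fin n → Fin n → ℝ :=
  fun w u => (1 + t u)⁻¹ * g⁻¹ u w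

/-- The power function along the deformation family. -/
def Phi (γ : Fin n → ℂ) (g : Matrix (Fin n) (Fin n) ℝ) (t : Fin n → ℝ) : ℂ :=
  ∏ v : Fin n,
    ((dotR (gs (Fam g t) v) (gs (Fam g t) v) : ℝ) : ℂ) ^ (-(γ v) / 2)

theorem Fam_zero (g : Matrix (Fin n) (Fin n) ℝ) : Fam g 0 = fun w u => g⁻¹ u w := by
  funext w u
  simp [Fam]

theorem Fam_li (g : Matrix (Fin n) (Fin n) ℝ) (hg : IsUnit g.det) :
    LinearIndependent ℝ (Fam g 0) := by
  rw [Fam_zero]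
  have h1 : IsUnit g⁻¹ := Matrix.isUnit_nonsing_inv_iff.mpr ((Matrix.isUnit_iff_isUnit_det g).mpr hg)
  have h2 : LinearIndependent ℝ (fun i => Matrix.transpose g⁻¹ i) :=
    Matrix.linearIndependent_cols_iff_isUnit.mpr h1
  have h3 : (fun w u => g⁻¹ u w) = fun i => Matrix.transpose g⁻¹ i := by
    funext w u
    simp [Matrix.transpose_apply]
  rw [h3]
  exact h2

theorem Fam_dot_pos (g : Matrix (Fin n) (Fin n) ℝ) (hg : IsUnit g.det) (v : Fin n) :
    0 < dotR (gs (Fam g 0) v) (gs (Fam g 0) v) :=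
  dotR_self_pos (gs_ne_zero (Fam_li g hg) v)

theorem dot_diffAt {x y : (Fin n → ℝ) → Fin n → ℝ} {t0 : Fin n → ℝ}
    (hx : ∀ u, DifferentiableAt ℝ (fun t => x t u) t0)
    (hy : ∀ u, DifferentiableAt ℝ (fun t => y t u) t0) :
    DifferentiableAt ℝ (fun t => dotR (x t) (y t)) t0 := by
  simp only [dotR]
  exact DifferentiableAt.fun_sum fun u _ => (hx u).mul (hy u)

theorem Fam_entry_diffAt (g : Matrix (Fin n) (Fin n) ℝ) (w u : Fin n) :
    DifferentiableAt ℝ (fun t : Fin n → ℝ => Fam g t w u) 0 := by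
  have h1 : DifferentiableAt ℝ (fun t : Fin n → ℝ => (1 : ℝ) + t u) 0 :=
    (differentiableAt_const 1).add
      ((ContinuousLinearMap.proj u : (Fin n → ℝ) →L[ℝ] ℝ).differentiableAt)
  have h2 : (fun t : Fin n → ℝ => (1 : ℝ) + t u) 0 ≠ 0 := by simp
  exact (h1.inv h2).mul_const _

theorem gs_entry_diffAt (g : Matrix (Fin n) (Fin n) ℝ) (hg : IsUnit g.det) (v : Fin n)
    (u : Fin n) : DifferentiableAt ℝ (fun t : Fin n → ℝ => gs (Fam g t) v u) 0 := by
  have key : ∀ m : ℕ, ∀ v : Fin n, v.val = m → ∀ u : Fin n,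
      DifferentiableAt ℝ (fun t : Fin n → ℝ => gs (Fam g t) v u) 0 := by
    intro m
    induction m using Nat.strong_induction_on with
    | _ m ih =>
      intro v hv u
      have heq : (fun t : Fin n → ℝ => gs (Fam g t) v u) = fun t : Fin n → ℝ =>
          Fam g t v u - ∑ k : Fin v.val,
            (dotR (Fam g t v) (gs (Fam g t) ⟨k.val, Nat.lt_trans k.isLt v.isLt⟩) *
              (dotR (gs (Fam g t) ⟨k.val, Nat.lt_trans k.isLt v.isLt⟩)
                (gs (Fam g t) ⟨k.val, Nat.lt_trans k.isLt v.isLt⟩))⁻¹) *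
              gs (Fam g t) ⟨k.val, Nat.lt_trans k.isLt v.isLt⟩ u := by
        funext t
        rw [gs_apply]
        simp [Finset.sum_apply, div_eq_mul_inv]
      rw [heq]
      apply DifferentiableAt.sub
      · exact Fam_entry_diffAt g v u
      · apply DifferentiableAt.fun_sum
        intro k _
        have hkdiff : ∀ u' : Fin n, DifferentiableAt ℝ
            (fun t : Fin n → ℝ => gs (Fam g t) ⟨k.val, Nat.lt_trans k.isLt v.isLt⟩ u') 0 :=
          ih k.val (hv ▸ k.isLt) ⟨k.val, Nat.lt_trans k.isLt v.isLt⟩ rfl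
        have hnum : DifferentiableAt ℝ (fun t : Fin n → ℝ =>
            dotR (Fam g t v) (gs (Fam g t) ⟨k.val, Nat.lt_trans k.isLt v.isLt⟩)) 0 :=
          dot_diffAt (fun u' => Fam_entry_diffAt g v u') hkdiff
        have hden : DifferentiableAt ℝ (fun t : Fin n → ℝ =>
            dotR (gs (Fam g t) ⟨k.val, Nat.lt_trans k.isLt v.isLt⟩)
              (gs (Fam g t) ⟨k.val, Nat.lt_trans k.isLt v.isLt⟩)) 0 :=
          dot_diffAt hkdiff hkdiff
        have hden0 : dotR (gs (Fam g 0) ⟨k.val, Nat.lt_trans k.isLt v.isLt⟩)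
            (gs (Fam g 0) ⟨k.val, Nat.lt_trans k.isLt v.isLt⟩) ≠ 0 :=
          (Fam_dot_pos g hg _).ne'
        exact (hnum.mul (hden.inv hden0)).mul (hkdiff u)
  exact key v.val v rfl u

theorem prod_diffAt {E : Type*} [NormedAddCommGroup E] [NormedSpace ℝ E]
    {ι : Type*} (s : Finset ι) (f : ι → E → ℂ) {x : E}
    (h : ∀ i ∈ s, DifferentiableAt ℝ (f i) x) :
    DifferentiableAt ℝ (fun y => ∏ i ∈ s, f i y) x := by
  classical
  induction s using Finset.induction_on with
  | empty => simpa using differentiableAt_const (1 : ℂ)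
  | insert _ _ hni ih =>
    simp only [Finset.prod_insert hni]
    exact (h _ (Finset.mem_insert_self _ _)).mul
      (ih fun i hi => h i (Finset.mem_insert_of_mem hi))

theorem Phi_diffAt (γ : Fin n → ℂ) (g : Matrix (Fin n) (Fin n) ℝ) (hg : IsUnit g.det) :
    DifferentiableAt ℝ (Phi γ g) 0 := by
  apply prod_diffAt
  intro v _
  have hdot : DifferentiableAt ℝ
      (fun t : Fin n → ℝ => dotR (gs (Fam g t) v) (gs (Fam g t) v)) 0 :=
    dot_diffAt (fun u => gs_entry_diffAt g hg v u) (fun u => gs_entry_diffAt g hg v u)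
  have hinner : DifferentiableAt ℝ
      (fun t : Fin n → ℝ => ((dotR (gs (Fam g t) v) (gs (Fam g t) v) : ℝ) : ℂ)) 0 := by
    have h := DifferentiableAt.comp (𝕜 := ℝ)
      (g := fun x : ℝ => (x : ℂ))
      (f := fun t : Fin n → ℝ => dotR (gs (Fam g t) v) (gs (Fam g t) v))
      0 Complex.ofRealCLM.differentiableAt hdot
    simpa [Function.comp_def] using h
  have houter : DifferentiableAt ℂ (fun z : ℂ => z ^ (-(γ v) / 2))
      ((dotR (gs (Fam g 0) v) (gs (Fam g 0) v) : ℝ) : ℂ) :=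
    differentiableAt_id.cpow (differentiableAt_const _)
      (Complex.ofReal_mem_slitPlane.mpr (Fam_dot_pos g hg v))
  have h2 := DifferentiableAt.comp (𝕜 := ℝ)
      (g := fun z : ℂ => z ^ (-(γ v) / 2))
      (f := fun t : Fin n → ℝ => ((dotR (gs (Fam g t) v) (gs (Fam g t) v) : ℝ) : ℂ))
      0 (houter.restrictScalars ℝ) hinner
  simpa [Function.comp_def] using h2

/-- Product of `cpow`s with a fixed nonzero base. -/
theorem prod_cpow_eq_cpow_sum {ι : Type*} (s : Finset ι) {x : ℂ} (hx : x ≠ 0) (c : ι → ℂ) :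
    ∏ i ∈ s, x ^ c i = x ^ (∑ i ∈ s, c i) := by
  classical
  induction s using Finset.induction_on with
  | empty => simp
  | insert _ _ hni ih =>
    rw [Finset.prod_insert hni, Finset.sum_insert hni, Complex.cpow_add _ _ hx, ih]

theorem stdBasis_diag (n : ℕ) (i : Fin n) (s : ℝ) :
    s • Matrix.single i i (1 : ℝ) = Matrix.diagonal (Pi.single i s) := by
  ext a b
  rcases eq_or_ne a i with rfl | ha
  · rcases eq_or_ne b a with rfl | hb
    · simp [Matrix.single, Matrix.diagonal_apply]
    · simp [Matrix.single, Matrix.diagonal_apply, hb, Ne.symm hb]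
  · rcases eq_or_ne a b with rfl | hb
    · simp [Matrix.single, Matrix.diagonal_apply, Pi.single_eq_of_ne ha, Ne.symm ha]
    · simp [Matrix.single, Matrix.diagonal_apply, hb, Ne.symm ha]

theorem powFun_eq_Phi (γ : Fin n → ℂ) (g : Matrix (Fin n) (Fin n) ℝ) (hg : IsUnit g.det)
    (t : Fin n → ℝ) (ht : ∀ j, (1 : ℝ) + t j ≠ 0) :
    powFun n γ (g * (1 + Matrix.diagonal t)) = Phi γ g t := by
  have h1 : (1 : Matrix (Fin n) (Fin n) ℝ) + Matrix.diagonal t =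
      Matrix.diagonal (fun j => 1 + t j) := by
    rw [← Matrix.diagonal_one, Matrix.diagonal_add]
  have hd : (g * (1 + Matrix.diagonal t))⁻¹ =
      Matrix.diagonal (fun j => (1 + t j)⁻¹) * g⁻¹ := by
    apply Matrix.inv_eq_right_inv
    rw [h1]
    calc g * Matrix.diagonal (fun j => 1 + t j) *
          (Matrix.diagonal (fun j => (1 + t j)⁻¹) * g⁻¹)
        = g * (Matrix.diagonal (fun j => 1 + t j) *
            Matrix.diagonal (fun j => (1 + t j)⁻¹)) * g⁻¹ := by
          rw [Matrix.mul_assoc, Matrix.mul_assoc, Matrix.mul_assoc]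
      _ = g * g⁻¹ := by
          rw [Matrix.diagonal_mul_diagonal]
          have : (fun j => (1 + t j) * (1 + t j)⁻¹) = fun _ => (1 : ℝ) := by
            funext j; exact mul_inv_cancel₀ (ht j)
          rw [this, Matrix.diagonal_one, Matrix.mul_one]
      _ = 1 := Matrix.mul_nonsing_inv g hg
  have hent : (fun w u => (g * (1 + Matrix.diagonal t))⁻¹ u w) = Fam g t := by
    funext w u
    rw [hd, Matrix.diagonal_mul]
    rfl
  unfold powFun Phi
  rw [hent]

theorem Phi_const (γ : Fin n → ℂ) (hsum : ∑ v : Fin n, γ v = 0)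
    (g : Matrix (Fin n) (Fin n) ℝ) (hg : IsUnit g.det) (s : ℝ) (hs : |s| < 1) :
    Phi γ g (fun _ => s) = Phi γ g 0 := by
  have h1 : (0 : ℝ) < 1 + s := by
    have := abs_lt.mp hs
    linarith [this.1]
  set r : ℝ := (1 + s)⁻¹ with hrdef
  have hr0 : r ≠ 0 := inv_ne_zero h1.ne'
  have hFam : Fam g (fun _ => s) = fun w => r • Fam g 0 w := by
    funext w u
    simp [Fam, hrdef]
  unfold Phi
  rw [hFam]
  have step : ∀ v : Fin n,
      ((dotR (gs (fun w => r • Fam g 0 w) v) (gs (fun w => r • Fam g 0 w) v) : ℝ) : ℂ)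
          ^ (-(γ v) / 2)
        = (((r * r : ℝ)) : ℂ) ^ (-(γ v) / 2) *
          ((dotR (gs (Fam g 0) v) (gs (Fam g 0) v) : ℝ) : ℂ) ^ (-(γ v) / 2) := by
    intro v
    rw [gs_smul _ hr0, dotR_smul_smul, Complex.ofReal_mul]
    exact Complex.mul_cpow_ofReal_nonneg (mul_self_nonneg r) (Fam_dot_pos g hg v).le _
  rw [Finset.prod_congr rfl fun v _ => step v, Finset.prod_mul_distrib]
  have hx : (((r * r : ℝ)) : ℂ) ≠ 0 := by
    exact_mod_cast mul_ne_zero hr0 hr0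
  rw [prod_cpow_eq_cpow_sum _ hx]
  have hzero : (∑ v : Fin n, -(γ v) / 2) = 0 := by
    rw [← Finset.sum_div, Finset.sum_neg_distrib, hsum, neg_zero, zero_div]
  rw [hzero, Complex.cpow_zero, one_mul]

theorem gamma_sum (n : ℕ) (hn : 1 ≤ n) (α : Fin n → ℂ) (hα : ∑ v : Fin n, α v = 0) :
    ∑ v : Fin n, (α v + (((n : ℂ) + 1) / 2 - (((v : ℕ) : ℂ) + 1))) = 0 := by
  rw [Finset.sum_add_distrib, hα, zero_add]
  have hS : (∑ v : Fin n, ((v : ℕ) : ℂ)) * 2 = (n : ℂ) * ((n : ℂ) - 1) := by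
    have h4 : ∑ v : Fin n, ((v : ℕ) : ℂ) = ∑ i ∈ Finset.range n, ((i : ℕ) : ℂ) :=
      Fin.sum_univ_eq_sum_range (fun i => ((i : ℕ) : ℂ)) n
    have h2 := Finset.sum_range_id_mul_two n
    have h5 : ((n : ℂ) - 1) = ((n - 1 : ℕ) : ℂ) := by
      rw [Nat.cast_sub hn]; push_cast; ring
    rw [h4, ← Nat.cast_sum, h5]
    exact_mod_cast h2
  rw [Finset.sum_sub_distrib, Finset.sum_const, Finset.card_univ, Fintype.card_fin,
    Finset.sum_add_distrib, Finset.sum_const, Finset.card_univ, Fintype.card_fin]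
  simp only [nsmul_eq_mul, mul_one]
  linear_combination (-1/2 : ℂ) * hS

theorem single_hasDerivAt (n : ℕ) (i : Fin n) :
    HasDerivAt (fun s : ℝ => (Pi.single i s : Fin n → ℝ)) (Pi.single i (1 : ℝ)) 0 := by
  have heq : (fun s : ℝ => (Pi.single i s : Fin n → ℝ))
      = fun s : ℝ => s • (Pi.single i (1 : ℝ) : Fin n → ℝ) := by
    funext s j
    simp [Pi.single_apply, mul_ite]
  rw [heq]
  simpa using (hasDerivAt_id (0 : ℝ)).smul_const (Pi.single i (1 : ℝ) : Fin n → ℝ)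

theorem const_hasDerivAt (n : ℕ) :
    HasDerivAt (fun s : ℝ => (fun _ => s : Fin n → ℝ)) (fun _ => (1 : ℝ)) 0 := by
  have heq : (fun s : ℝ => (fun _ => s : Fin n → ℝ))
      = fun s : ℝ => s • (fun _ => (1 : ℝ) : Fin n → ℝ) := by
    funext s j
    simp
  rw [heq]
  simpa using (hasDerivAt_id (0 : ℝ)).smul_const (fun _ => (1 : ℝ) : Fin n → ℝ)

/-- **Order-1 Casimir eigenvalue on the power function.**  Let `n ≥ 1`,
`Σ_v α_v = 0`, and `ρ_v = (n+1)/2 − v` (with `v` running from `1` to `n`).  Then for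
every `g ∈ GL(n,ℝ)`, `Σᵢ (D_{i,i} |·|^{α+ρ})(g) = 0`, where
`(D_{a,b} F)(g) = d/dt F(g (I + t E_{a,b})) |_{t=0}`. -/
theorem order_one_casimir_eigenvalue (n : ℕ) (hn : 1 ≤ n)
    (α : Fin n → ℂ) (hα : ∑ v : Fin n, α v = 0)
    (g : Matrix (Fin n) (Fin n) ℝ) (hg : IsUnit g.det) :
    ∑ i : Fin n,
      deriv (fun s : ℝ =>
        powFun n (fun v => α v + (((n : ℂ) + 1) / 2 - ((v : ℕ) + 1)))
          (g * ((1 : Matrix (Fin n) (Fin n) ℝ) + s • Matrix.single i i 1))) 0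
      = 0 := by
  set γ : Fin n → ℂ := fun v => α v + (((n : ℂ) + 1) / 2 - (((v : ℕ) : ℂ) + 1)) with hγdef
  have hsum : ∑ v : Fin n, γ v = 0 := gamma_sum n hn α hα
  have hΦ : DifferentiableAt ℝ (Phi γ g) 0 := Phi_diffAt γ g hg
  have hball : Metric.ball (0 : ℝ) 1 ∈ nhds (0 : ℝ) := Metric.ball_mem_nhds _ one_pos
  have hderiv : ∀ i : Fin n,
      deriv (fun s : ℝ =>
        powFun n γ (g * ((1 : Matrix (Fin n) (Fin n) ℝ) + s • Matrix.single i i 1))) 0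
      = fderiv ℝ (Phi γ g) 0 (Pi.single i (1 : ℝ) : Fin n → ℝ) := by
    intro i
    have hev : (fun s : ℝ =>
        powFun n γ (g * ((1 : Matrix (Fin n) (Fin n) ℝ) + s • Matrix.single i i 1)))
        =ᶠ[nhds (0 : ℝ)] fun s => Phi γ g (Pi.single i s : Fin n → ℝ) := by
      filter_upwards [hball] with s hs
      have hs1 : |s| < 1 := by simpa [Real.dist_eq] using hs
      have ht : ∀ j, (1 : ℝ) + (Pi.single i s : Fin n → ℝ) j ≠ 0 := by
        intro j
        rcases eq_or_ne j i with rfl | hj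
        · have := abs_lt.mp hs1
          simp only [Pi.single_eq_same]
          linarith [this.1]
        · simp [Pi.single_eq_of_ne hj]
      rw [stdBasis_diag, powFun_eq_Phi γ g hg _ ht]
    rw [hev.deriv_eq]
    have hF : HasFDerivAt (Phi γ g) (fderiv ℝ (Phi γ g) 0) (Pi.single i (0 : ℝ)) := by
      rw [Pi.single_zero]
      exact hΦ.hasFDerivAt
    have hcomp := hF.comp_hasDerivAt 0 (single_hasDerivAt n i)
    have hcomp' : HasDerivAt (fun s : ℝ => Phi γ g (Pi.single i s : Fin n → ℝ))
        (fderiv ℝ (Phi γ g) 0 (Pi.single i (1 : ℝ) : Fin n → ℝ)) 0 := hcomp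
    exact hcomp'.deriv
  rw [Finset.sum_congr rfl fun i _ => hderiv i, ← map_sum]
  have hones : (∑ i : Fin n, (Pi.single i (1 : ℝ) : Fin n → ℝ)) = (fun _ => (1 : ℝ) : Fin n → ℝ) := by
    funext j
    rw [Finset.sum_apply]
    simp [Pi.single_apply]
  rw [hones]
  have hF2 : HasFDerivAt (Phi γ g) (fderiv ℝ (Phi γ g) 0) ((fun _ => (0 : ℝ)) : Fin n → ℝ) :=
    hΦ.hasFDerivAt
  have hcomp2 := hF2.comp_hasDerivAt 0 (const_hasDerivAt n)
  have hcomp2' : HasDerivAt (fun s : ℝ => Phi γ g (fun _ => s))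
      (fderiv ℝ (Phi γ g) 0 (fun _ => (1 : ℝ) : Fin n → ℝ)) 0 := hcomp2
  rw [← hcomp2'.deriv]
  have hev2 : (fun s : ℝ => Phi γ g (fun _ => s)) =ᶠ[nhds (0 : ℝ)]
      (fun _ => Phi γ g 0) := by
    filter_upwards [hball] with s hs
    have hs1 : |s| < 1 := by simpa [Real.dist_eq] using hs
    exact Phi_const γ hsum g hg s hs1
  rw [hev2.deriv_eq]
  exact deriv_const _ _

end
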